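/- arXiv:2305.19838 — 7 statements merged into one kernel-verified Lean document; each statement's English description precedes it below -/
import Mathlib

section
/- Let v₋, v₊ be real numbers with 0 < v₋ < v₊. Then for every real a > 0, (8/3)·(v₊³ − v₋³)·a³ − (12/5)·(v₊^{5/2} − v₋^{5/2})·a² + (1/3)·(v₊^{3/2} − v₋^{3/2}) > 0. Consequently the quartic P(a) = (2/3)(v₊³ − v₋³)a⁴ − (4/5)(v₊^{5/2} − v₋^{5/2})a³ + (1/3)(v₊^{3/2} − v₋^{3/2})a − (1/8)(v₊ − v₋) is strictly increasing on (0, ∞). -/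
/-!
With `x = √v₋`, `y = √v₊` the cubic reads `(8/3) A a³ − (12/5) B a² + (1/3) C` where
`A = y⁶ − x⁶`, `B = y⁵ − x⁵`, `C = y³ − x³`. On `a > 0` it is smallest at `a = 3B/(5A)`, and
completing the cube there gives
`375 A² · cubic = 4 (5Aa − 3B)² (10Aa + 3B) + (125 A² C − 108 B³)`,
so positivity reduces to the polynomial inequality `108 B³ < 125 A² C`. Expanding in `x` and
`y − x`, its two sides differ by a polynomial with positive coefficients.
-/

theorem cube_pow_five_sub_lt {x y : ℝ} (hx : 0 ≤ x) (hxy : x < y) :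
    108 * (y ^ 5 - x ^ 5) ^ 3 < 125 * (y ^ 6 - x ^ 6) ^ 2 * (y ^ 3 - x ^ 3) := by
  obtain ⟨d, hd, rfl⟩ : ∃ d, 0 < d ∧ y = x + d := ⟨y - x, sub_pos.2 hxy, by ring⟩
  rw [← sub_pos]
  calc (0 : ℝ)
      < 17 * d ^ 15 + 255 * x * d ^ 14 + 1785 * x ^ 2 * d ^ 13 + 7610 * x ^ 3 * d ^ 12
        + 21705 * x ^ 4 * d ^ 11 + 43125 * x ^ 5 * d ^ 10 + 60575 * x ^ 6 * d ^ 9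
        + 59850 * x ^ 7 * d ^ 8 + 40275 * x ^ 8 * d ^ 7 + 16875 * x ^ 9 * d ^ 6
        + 3375 * x ^ 10 * d ^ 5 := by positivity
    _ = _ := by ring

theorem cubic_pos_of_cube_lt {A B C a : ℝ} (hA : 0 < A) (hB : 0 ≤ B) (ha : 0 ≤ a)
    (h : 108 * B ^ 3 < 125 * A ^ 2 * C) :
    0 < 8 / 3 * A * a ^ 3 - 12 / 5 * B * a ^ 2 + 1 / 3 * C := by
  have hsq : 0 ≤ 4 * (5 * A * a - 3 * B) ^ 2 * (10 * A * a + 3 * B) := by positivity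
  refine pos_of_mul_pos_right (a := 375 * A ^ 2) ?_ (by positivity)
  calc 0 < 4 * (5 * A * a - 3 * B) ^ 2 * (10 * A * a + 3 * B) + (125 * A ^ 2 * C - 108 * B ^ 3) :=
        by linarith
    _ = _ := by ring

theorem hasDerivAt_quartic (α β γ δ a : ℝ) :
    HasDerivAt (fun a => 2 / 3 * α * a ^ 4 - 4 / 5 * β * a ^ 3 + 1 / 3 * γ * a - δ)
      (8 / 3 * α * a ^ 3 - 12 / 5 * β * a ^ 2 + 1 / 3 * γ) a := by
  have h := ((((hasDerivAt_pow 4 a).const_mul (2 / 3 * α)).sub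
    ((hasDerivAt_pow 3 a).const_mul (4 / 5 * β))).add
    ((hasDerivAt_id a).const_mul (1 / 3 * γ))).sub_const δ
  refine h.congr_deriv ?_
  push_cast
  ring

theorem quartic_deriv_pos {vm vp a : ℝ} (h0 : 0 ≤ vm) (h1 : vm < vp) (ha : 0 ≤ a) :
    0 < 8 / 3 * (vp ^ 3 - vm ^ 3) * a ^ 3
      - 12 / 5 * (vp ^ ((5 : ℝ) / 2) - vm ^ ((5 : ℝ) / 2)) * a ^ 2
      + 1 / 3 * (vp ^ ((3 : ℝ) / 2) - vm ^ ((3 : ℝ) / 2)) := by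
  have hvp : 0 ≤ vp := h0.trans h1.le
  have hsqrt : √vm < √vp := Real.sqrt_lt_sqrt h0 h1
  have hcube (v : ℝ) (hv : 0 ≤ v) : v ^ 3 = √v ^ 6 := by rw [← Real.sq_sqrt hv, ← pow_mul]; simp
  have hhalf (v r : ℝ) (hv : 0 ≤ v) : v ^ (r / 2) = √v ^ r := Real.rpow_div_two_eq_sqrt r hv
  simp only [hcube vm h0, hcube vp hvp, hhalf vm _ h0, hhalf vp _ hvp, Real.rpow_ofNat]
  have hpow (n : ℕ) (hn : n ≠ 0) : 0 < √vp ^ n - √vm ^ n :=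
    sub_pos.2 (pow_lt_pow_left₀ hsqrt (Real.sqrt_nonneg _) hn)
  exact cubic_pos_of_cube_lt (hpow 6 (by norm_num)) (hpow 5 (by norm_num)).le ha
    (cube_pow_five_sub_lt (Real.sqrt_nonneg _) hsqrt)

/-- The cubic `P′(a)` is positive for every `a > 0`, hence the quartic `P` is
strictly increasing on `(0, ∞)`. -/
theorem quartic_deriv_pos_and_strictMono (vm vp : ℝ) (h0 : 0 < vm) (h1 : vm < vp)
    (P : ℝ → ℝ)
    (hP : ∀ a : ℝ, P a =
      2 / 3 * (vp ^ 3 - vm ^ 3) * a ^ 4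
        - 4 / 5 * (vp ^ ((5 : ℝ) / 2) - vm ^ ((5 : ℝ) / 2)) * a ^ 3
        + 1 / 3 * (vp ^ ((3 : ℝ) / 2) - vm ^ ((3 : ℝ) / 2)) * a
        - 1 / 8 * (vp - vm)) :
    (∀ a : ℝ, 0 < a →
      0 < 8 / 3 * (vp ^ 3 - vm ^ 3) * a ^ 3
            - 12 / 5 * (vp ^ ((5 : ℝ) / 2) - vm ^ ((5 : ℝ) / 2)) * a ^ 2
            + 1 / 3 * (vp ^ ((3 : ℝ) / 2) - vm ^ ((3 : ℝ) / 2))) ∧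
    StrictMonoOn P (Set.Ioi 0) := by
  refine ⟨fun a ha => quartic_deriv_pos h0.le h1 ha.le, ?_⟩
  obtain rfl : P = _ := funext hP
  have hderiv := hasDerivAt_quartic (vp ^ 3 - vm ^ 3) (vp ^ ((5 : ℝ) / 2) - vm ^ ((5 : ℝ) / 2))
    (vp ^ ((3 : ℝ) / 2) - vm ^ ((3 : ℝ) / 2)) (1 / 8 * (vp - vm))
  refine strictMonoOn_of_deriv_pos (convex_Ioi 0)
    (fun a _ => (hderiv a).continuousAt.continuousWithinAt) fun a ha => ?_
  rw [interior_Ioi] at ha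
  exact (hderiv a).deriv ▸ quartic_deriv_pos h0.le h1 (le_of_lt ha)
end

section
/- Let v₋, v₊ be real numbers with 0 < v₋ < v₊, and define P(a) = (2/3)(v₊³ − v₋³)a⁴ − (4/5)(v₊^{5/2} − v₋^{5/2})a³ + (1/3)(v₊^{3/2} − v₋^{3/2})a − (1/8)(v₊ − v₋). Then there exists a unique real a > 0 such that P(a) = 0. -/
/-!
With `q t = 2t⁴ - 2t³ + t/2 - 1/8 = 2(t - 1/2)³(t + 1/2)`, the quartic is an average of rescaled
copies of `q`: `P a = ∫_{v₋}^{v₊} q(√v a) dv`, because `∂/∂v` of the corresponding antiderivative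
is `q(√v a)`. Since `q` is strictly increasing on `[0, ∞)`, so is `P`; moreover `P 0 < 0`, and
`P a > 0` as soon as `√v₋ a > 1/2`, since then every `q(√v a)` is positive. The intermediate value
theorem and monotonicity give exactly one positive root.
-/

open Set intervalIntegral

noncomputable def quarticProfile (t : ℝ) : ℝ := 2 * t ^ 4 - 2 * t ^ 3 + t / 2 - 1 / 8

lemma quarticProfile_eq (t : ℝ) : quarticProfile t = 2 * (t - 1 / 2) ^ 3 * (t + 1 / 2) := by
  unfold quarticProfile; ring

lemma quarticProfile_pos {t : ℝ} (ht : 1 / 2 < t) : 0 < quarticProfile t := by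
  have : 0 < t - 1 / 2 := by linarith
  rw [quarticProfile_eq]
  positivity

lemma strictMonoOn_quarticProfile : StrictMonoOn quarticProfile (Ici 0) := by
  intro s hs t _ hst
  simp only [mem_Ici] at hs
  have hts : 0 < t - s := sub_pos.2 hst
  unfold quarticProfile
  nlinarith [mul_nonneg hs (sq_nonneg (2 * s - 1)), mul_nonneg hts.le (sq_nonneg (2 * t - 1)),
    mul_nonneg hts.le (sq_nonneg (s + t - 1)), mul_pos hts hts,
    mul_nonneg hts.le (sq_nonneg (2 * s - 1))]

lemma hasDerivAt_quarticProfile_primitive (a : ℝ) {v : ℝ} (hv : 0 ≤ v) :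
    HasDerivAt (fun v : ℝ => 2 / 3 * v ^ 3 * a ^ 4 - 4 / 5 * v ^ ((5 : ℝ) / 2) * a ^ 3
        + 1 / 3 * v ^ ((3 : ℝ) / 2) * a - 1 / 8 * v) (quarticProfile (√v * a)) v := by
  have h52 := Real.hasDerivAt_rpow_const (x := v) (p := 5 / 2) (Or.inr (by norm_num))
  have h32 := Real.hasDerivAt_rpow_const (x := v) (p := 3 / 2) (Or.inr (by norm_num))
  have h := (((((hasDerivAt_pow 3 v).const_mul (2 / 3)).mul_const (a ^ 4)).fun_sub
    ((h52.const_mul (4 / 5)).mul_const (a ^ 3))).fun_add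
    ((h32.const_mul (1 / 3)).mul_const a)).fun_sub ((hasDerivAt_id' v).const_mul (1 / 8))
  refine h.congr_deriv ?_
  have hsq := Real.sq_sqrt hv
  norm_num [quarticProfile, Real.rpow_div_two_eq_sqrt _ hv]
  linear_combination (-2 * a ^ 4 * (v + √v ^ 2)) * hsq

lemma continuous_quarticProfile : Continuous quarticProfile := by
  unfold quarticProfile; fun_prop

lemma continuous_quarticProfile_sqrt_mul (a : ℝ) : Continuous fun v => quarticProfile (√v * a) :=
  continuous_quarticProfile.comp (Real.continuous_sqrt.mul continuous_const)

lemma integral_quarticProfile_sqrt_mul (a : ℝ) {vm vp : ℝ} (hm : 0 ≤ vm) (hp : 0 ≤ vp) :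
    ∫ v in vm..vp, quarticProfile (√v * a) =
      2 / 3 * (vp ^ 3 - vm ^ 3) * a ^ 4
        - 4 / 5 * (vp ^ ((5 : ℝ) / 2) - vm ^ ((5 : ℝ) / 2)) * a ^ 3
        + 1 / 3 * (vp ^ ((3 : ℝ) / 2) - vm ^ ((3 : ℝ) / 2)) * a
        - 1 / 8 * (vp - vm) := by
  rw [integral_eq_sub_of_hasDerivAt
    (fun v hv => hasDerivAt_quarticProfile_primitive a ((le_inf hm hp).trans hv.1))
    ((continuous_quarticProfile_sqrt_mul a).intervalIntegrable vm vp)]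
  ring

lemma strictMonoOn_integral_quarticProfile_sqrt_mul {vm vp : ℝ} (hm : 0 ≤ vm) (h : vm < vp) :
    StrictMonoOn (fun a => ∫ v in vm..vp, quarticProfile (√v * a)) (Ici 0) := by
  intro a ha b hb hab
  have hlt : ∀ v, 0 < v → quarticProfile (√v * a) < quarticProfile (√v * b) := fun v hv =>
    strictMonoOn_quarticProfile (mul_nonneg (Real.sqrt_nonneg v) ha)
      (mul_nonneg (Real.sqrt_nonneg v) hb) (mul_lt_mul_of_pos_left hab (Real.sqrt_pos.2 hv))
  exact integral_lt_integral_of_continuousOn_of_le_of_exists_lt h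
    (continuous_quarticProfile_sqrt_mul a).continuousOn
    (continuous_quarticProfile_sqrt_mul b).continuousOn
    (fun v hv => (hlt v (hm.trans_lt hv.1)).le) ⟨vp, right_mem_Icc.2 h.le, hlt vp (hm.trans_lt h)⟩

lemma integral_quarticProfile_sqrt_mul_pos {vm vp a : ℝ} (h : vm < vp) (ha : 0 ≤ a)
    (hma : 1 / 2 < √vm * a) : 0 < ∫ v in vm..vp, quarticProfile (√v * a) :=
  intervalIntegral_pos_of_pos_on ((continuous_quarticProfile_sqrt_mul a).intervalIntegrable vm vp)
    (fun _ hv => quarticProfile_pos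
      (hma.trans_le (mul_le_mul_of_nonneg_right (Real.sqrt_le_sqrt hv.1.le) ha))) h

lemma existsUnique_zero_of_strictMonoOn {f : ℝ → ℝ} {c b : ℝ} (hmono : StrictMonoOn f (Ici c))
    (hcont : ContinuousOn f (Icc c b)) (hc : f c < 0) (hb : 0 < f b) (hcb : c ≤ b) :
    ∃! a, c < a ∧ f a = 0 := by
  obtain ⟨a, ha, hfa⟩ := intermediate_value_Ioo hcb hcont ⟨hc, hb⟩
  refine ⟨a, ⟨ha.1, hfa⟩, fun x ⟨hx, hfx⟩ => ?_⟩
  exact hmono.injOn (mem_Ici.2 hx.le) (mem_Ici.2 ha.1.le) (hfx.trans hfa.symm)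

/-- The quartic `P` has a unique positive real root. -/
theorem quartic_unique_positive_root (vm vp : ℝ) (h0 : 0 < vm) (h1 : vm < vp)
    (P : ℝ → ℝ)
    (hP : ∀ a : ℝ, P a =
      2 / 3 * (vp ^ 3 - vm ^ 3) * a ^ 4
        - 4 / 5 * (vp ^ ((5 : ℝ) / 2) - vm ^ ((5 : ℝ) / 2)) * a ^ 3
        + 1 / 3 * (vp ^ ((3 : ℝ) / 2) - vm ^ ((3 : ℝ) / 2)) * a
        - 1 / 8 * (vp - vm)) :
    ∃! a : ℝ, 0 < a ∧ P a = 0 := by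
  have hP_cont : Continuous P := by
    rw [funext hP]; fun_prop
  have hP_int : P = fun a => ∫ v in vm..vp, quarticProfile (√v * a) := funext fun a => by
    rw [hP, integral_quarticProfile_sqrt_mul a h0.le (h0.trans h1).le]
  have hsqrt : 0 < √vm := Real.sqrt_pos.2 h0
  refine existsUnique_zero_of_strictMonoOn (b := 1 / √vm) ?_ hP_cont.continuousOn ?_ ?_
    (by positivity)
  · rw [hP_int]
    exact strictMonoOn_integral_quarticProfile_sqrt_mul h0.le h1
  · rw [hP]
    linarith
  · rw [hP_int]
    refine integral_quarticProfile_sqrt_mul_pos h1 (by positivity) ?_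
    rw [mul_one_div_cancel hsqrt.ne']
    norm_num
end

section
/- Let v₋, v₊ be real numbers with 0 < v₋ < v₊, define F(a) = ∫_{v₋}^{v₊} (√u − (a·u + 1/(4a)))² du and P(a) = (2/3)(v₊³ − v₋³)a⁴ − (4/5)(v₊^{5/2} − v₋^{5/2})a³ + (1/3)(v₊^{3/2} − v₋^{3/2})a − (1/8)(v₊ − v₋). If a* > 0 satisfies P(a*) = 0, then F(a*) ≤ F(b) for every b > 0; that is, the unique positive root of P is the global minimizer over (0, ∞) of the least-squares error of the affine overestimation a·u + 1/(4a) of √u on [v₋, v₊]. -/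
open MeasureTheory

/-!
Since `a u + 1/(4a) - √u = (a √u - 1/2)² / a`, the integrand equals `(√u - t)⁴ / (4t²)`
with `t = 1/(2a)`, and this is a convex function of `t > 0`. Its tangent inequality at
`t* = 1/(2a*)`, integrated over `[v₋, v₊]`, gives `F b ≥ F a* + (a*(b - a*)/b) F'(a*)`,
and `a*³ F'(a*) = P(a*) = 0`.
-/

/-- The derivative with respect to `a` of the integrand `(√u - (a u + 1/(4a)))²` of `F`. -/
noncomputable def lsqIntegrandDeriv (a u : ℝ) : ℝ :=
  2 * a * u ^ 2 - 2 * u ^ ((3 : ℝ) / 2) + u ^ ((1 : ℝ) / 2) / (2 * a ^ 2) - 1 / (8 * a ^ 3)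

lemma continuous_lsqIntegrandDeriv (a : ℝ) : Continuous (lsqIntegrandDeriv a) := by
  unfold lsqIntegrandDeriv
  fun_prop (disch := norm_num)

lemma integral_lsqIntegrandDeriv (vm vp : ℝ) {a : ℝ} (ha : a ≠ 0) :
    ∫ u in vm..vp, lsqIntegrandDeriv a u =
      (2 / 3 * (vp ^ 3 - vm ^ 3) * a ^ 4
        - 4 / 5 * (vp ^ ((5 : ℝ) / 2) - vm ^ ((5 : ℝ) / 2)) * a ^ 3
        + 1 / 3 * (vp ^ ((3 : ℝ) / 2) - vm ^ ((3 : ℝ) / 2)) * a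
        - 1 / 8 * (vp - vm)) / a ^ 3 := by
  have hderiv : ∀ u : ℝ, HasDerivAt
      (fun u => 2 / 3 * a * u ^ 3 - 4 / 5 * u ^ ((5 : ℝ) / 2) + u ^ ((3 : ℝ) / 2) / (3 * a ^ 2)
        - u / (8 * a ^ 3)) (lsqIntegrandDeriv a u) u := by
    intro u
    have h52 := Real.hasDerivAt_rpow_const (x := u) (p := (5 : ℝ) / 2) (Or.inr (by norm_num))
    have h32 := Real.hasDerivAt_rpow_const (x := u) (p := (3 : ℝ) / 2) (Or.inr (by norm_num))
    refine (((((hasDerivAt_pow 3 u).const_mul (2 / 3 * a)).sub (h52.const_mul (4 / 5))).add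
      (h32.div_const (3 * a ^ 2))).sub ((hasDerivAt_id u).div_const (8 * a ^ 3))).congr_deriv ?_
    rw [lsqIntegrandDeriv]
    norm_num
    field_simp
    ring
  rw [intervalIntegral.integral_eq_sub_of_hasDerivAt (fun u _ => hderiv u)
    ((continuous_lsqIntegrandDeriv a).intervalIntegrable _ _)]
  field_simp
  ring

lemma sq_rpow_natCast_div_two {s : ℝ} (hs : 0 ≤ s) (n : ℕ) :
    (s ^ 2) ^ ((n : ℝ) / 2) = s ^ n := by
  rw [← Real.rpow_natCast s 2, ← Real.rpow_mul hs, ← Real.rpow_natCast]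
  congr 1
  push_cast
  ring

/-- The tangent inequality of `t ↦ (√u - t)⁴ / (4t²)` at `t = 1/(2a)`, evaluated at
`t = 1/(2b)`. -/
lemma sq_sub_affine_add_tangent_le {u a b : ℝ} (hu : 0 ≤ u) (ha : 0 < a) (hb : 0 < b) :
    (√u - (a * u + 1 / (4 * a))) ^ 2 + a * (b - a) / b * lsqIntegrandDeriv a u ≤
      (√u - (b * u + 1 / (4 * b))) ^ 2 := by
  obtain ⟨s, hs, rfl⟩ : ∃ s, 0 ≤ s ∧ s ^ 2 = u := ⟨√u, Real.sqrt_nonneg u, Real.sq_sqrt hu⟩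
  have h3 : (s ^ 2) ^ ((3 : ℝ) / 2) = s ^ 3 := by
    exact_mod_cast sq_rpow_natCast_div_two hs 3
  have h1 : (s ^ 2) ^ ((1 : ℝ) / 2) = s := by
    simpa using sq_rpow_natCast_div_two hs 1
  rw [lsqIntegrandDeriv, Real.sqrt_sq hs, h3, h1, ← sub_nonneg]
  have hsq : 0 ≤ (a - b) ^ 2 * ((1 - 4 * a * b * s ^ 2) ^ 2 / (16 * a ^ 2 * b ^ 2)
      + s ^ 2 * (2 * a * s - 1) ^ 2 / (2 * a * b)) := by
    positivity
  convert hsq using 1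
  field_simp
  ring

/-- A positive root of the quartic `P` is the global minimizer over `(0, ∞)` of the
least-squares error `F` of the affine overestimation `a·u + 1/(4a)` of `√u` on `[v₋, v₊]`. -/
theorem quartic_root_minimizes_least_squares (vm vp : ℝ) (h0 : 0 < vm) (h1 : vm < vp)
    (F P : ℝ → ℝ)
    (hF : ∀ a : ℝ, F a = ∫ u in vm..vp, (Real.sqrt u - (a * u + 1 / (4 * a))) ^ 2)
    (hP : ∀ a : ℝ, P a =
      2 / 3 * (vp ^ 3 - vm ^ 3) * a ^ 4
        - 4 / 5 * (vp ^ ((5 : ℝ) / 2) - vm ^ ((5 : ℝ) / 2)) * a ^ 3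
        + 1 / 3 * (vp ^ ((3 : ℝ) / 2) - vm ^ ((3 : ℝ) / 2)) * a
        - 1 / 8 * (vp - vm))
    (astar : ℝ) (hastar : 0 < astar) (hroot : P astar = 0) :
    ∀ b : ℝ, 0 < b → F astar ≤ F b := by
  intro b hb
  have hslope : ∫ u in vm..vp, lsqIntegrandDeriv astar u = 0 := by
    rw [integral_lsqIntegrandDeriv vm vp hastar.ne', ← hP, hroot, zero_div]
  have hint_sq : ∀ c : ℝ,
      IntervalIntegrable (fun u => (√u - (c * u + 1 / (4 * c))) ^ 2) volume vm vp :=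
    fun c => (by fun_prop : Continuous _).intervalIntegrable _ _
  have hint_deriv : IntervalIntegrable
      (fun u => astar * (b - astar) / b * lsqIntegrandDeriv astar u) volume vm vp :=
    ((continuous_lsqIntegrandDeriv astar).intervalIntegrable _ _).const_mul _
  calc F astar = ∫ u in vm..vp, ((√u - (astar * u + 1 / (4 * astar))) ^ 2
        + astar * (b - astar) / b * lsqIntegrandDeriv astar u) := by
        rw [hF, intervalIntegral.integral_add (hint_sq astar) hint_deriv,
          intervalIntegral.integral_const_mul, hslope, mul_zero, add_zero]
    _ ≤ ∫ u in vm..vp, (√u - (b * u + 1 / (4 * b))) ^ 2 :=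
        intervalIntegral.integral_mono_on h1.le ((hint_sq astar).add hint_deriv) (hint_sq b)
          fun u hu => sq_sub_affine_add_tangent_le (h0.le.trans hu.1) hastar hb
    _ = F b := (hF b).symm
end

section
/- Let n be a positive integer and v : {1,…,n} → ℝ with vᵢ > 0 for all i. Define v₋ = Σᵢ vᵢ, δ₋ = √(Σ_{i ≠ j} √(vᵢ·vⱼ)) (the sum over all ordered pairs i ≠ j), v₊ = (√v₋ + 2δ₋)², and a = 1 / (2(√v₋ + δ₋)). Then for every vector x : {1,…,n} → ℝ satisfying √vᵢ ≤ xᵢ for all i and Σᵢ xᵢ² ≤ v₊, one has a·(Σᵢ xᵢ²) + 1/(4a) ≤ Σᵢ xᵢ. In particular, the affine-in-the-variance exploration term a·Σᵢ σᵢ² + 1/(4a) is a tighter bound than the sum Σᵢ σᵢ of factor-wise standard deviations. -/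
/-!
Write `m = √v₋`, `L = √v₋ + δ₋`, `P = Σ √vᵢ` and `u = √(Σ xᵢ²)`; the claim reads
`u² + L² ≤ 2 L Σ xᵢ`. Expanding the square gives `P² = m² + δ₋²`, and the reverse triangle
inequality, followed by `‖·‖₂ ≤ ‖·‖₁` on the nonnegative vector `x - √v`, gives
`Σ xᵢ ≥ P + u - m`. Since `2 L P ≥ L² + m²`, what is left is `(u - m) (u - m - 2δ₋) ≤ 0`,
i.e. exactly the window `√v₋ ≤ u ≤ √v₊` allowed by the hypotheses.
-/

open Finset

theorem sq_sum_eq_sum_sq_add_sum_sum_erase {ι R : Type*} [CommSemiring R] [DecidableEq ι]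
    (s : Finset ι) (f : ι → R) :
    (∑ i ∈ s, f i) ^ 2 = ∑ i ∈ s, f i ^ 2 + ∑ i ∈ s, ∑ j ∈ s.erase i, f i * f j := by
  rw [sq, sum_mul_sum, ← sum_add_distrib]
  refine sum_congr rfl fun i hi => ?_
  rw [← add_sum_erase s _ hi, sq]

theorem sq_sum_sqrt_eq {ι : Type*} [DecidableEq ι] (s : Finset ι) {v : ι → ℝ}
    (hv : ∀ i ∈ s, 0 ≤ v i) :
    (∑ i ∈ s, √(v i)) ^ 2 = ∑ i ∈ s, v i + ∑ i ∈ s, ∑ j ∈ s.erase i, √(v i * v j) := by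
  rw [sq_sum_eq_sum_sq_add_sum_sum_erase]
  congr 1
  · exact sum_congr rfl fun i hi => Real.sq_sqrt (hv i hi)
  · exact sum_congr rfl fun i hi => sum_congr rfl fun j _ => (Real.sqrt_mul (hv i hi) _).symm

theorem sqrt_sum_sq_sub_sqrt_sum_sq_le_sum_abs_sub {ι : Type*} [Fintype ι] (f g : ι → ℝ) :
    √(∑ i, f i ^ 2) - √(∑ i, g i ^ 2) ≤ ∑ i, |f i - g i| := by
  have hnorm : ∀ h : ι → ℝ, ‖WithLp.toLp 2 h‖ = √(∑ i, h i ^ 2) := fun h => by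
    simp [EuclideanSpace.norm_eq]
  calc √(∑ i, f i ^ 2) - √(∑ i, g i ^ 2)
      ≤ √(∑ i, (f i - g i) ^ 2) := by
        simpa only [hnorm, ← WithLp.toLp_sub, Pi.sub_apply] using
          norm_sub_norm_le (WithLp.toLp 2 f) (WithLp.toLp 2 g)
    _ ≤ ∑ i, |f i - g i| := by
        refine Real.sqrt_le_iff.mpr ⟨sum_nonneg fun i _ => abs_nonneg _, ?_⟩
        simpa only [sq_abs] using
          sum_sq_le_sq_sum_of_nonneg (s := univ) fun i _ => abs_nonneg (f i - g i)

theorem sq_add_sq_le_two_mul_mul_sqrt {m δ : ℝ} (hm : 0 ≤ m) (hδ : 0 ≤ δ) :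
    (m + δ) ^ 2 + m ^ 2 ≤ 2 * (m + δ) * √(m ^ 2 + δ ^ 2) := by
  refine le_of_pow_le_pow_left₀ two_ne_zero (by positivity) ?_
  -- after squaring, the difference of the two sides is `4 m δ³ + 3 δ⁴`
  rw [mul_pow, Real.sq_sqrt (by positivity)]
  nlinarith [mul_nonneg hm (pow_nonneg hδ 3), pow_nonneg hδ 4]

theorem sq_div_add_div_two_le {m δ u T : ℝ} (hm : 0 ≤ m) (hδ : 0 ≤ δ)
    (hmu : m ≤ u) (huδ : u ≤ m + 2 * δ) (hT : √(m ^ 2 + δ ^ 2) + u - m ≤ T) :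
    u ^ 2 / (2 * (m + δ)) + (m + δ) / 2 ≤ T := by
  rcases (add_nonneg hm hδ).eq_or_lt with hL | hL
  · obtain rfl : m = 0 := by linarith
    obtain rfl : δ = 0 := by linarith
    obtain rfl : u = 0 := by linarith
    simpa using hT
  · have hP := sq_add_sq_le_two_mul_mul_sqrt hm hδ
    rw [div_add_div _ _ (by positivity) two_ne_zero, div_le_iff₀ (by positivity)]
    nlinarith [mul_nonneg (sub_nonneg.mpr hmu) (sub_nonneg.mpr huδ)]

theorem affine_variance_bound_le_sum_std_general (n : ℕ)
    (v : Fin n → ℝ) (hv : ∀ i, 0 < v i)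
    (vm δm vp a : ℝ)
    (hvm : vm = ∑ i, v i)
    (hδm : δm = Real.sqrt (∑ i, ∑ j ∈ univ.erase i, Real.sqrt (v i * v j)))
    (hvp : vp = (Real.sqrt vm + 2 * δm) ^ 2)
    (ha : a = 1 / (2 * (Real.sqrt vm + δm)))
    (x : Fin n → ℝ)
    (hx : ∀ i, Real.sqrt (v i) ≤ x i)
    (hx2 : (∑ i, (x i) ^ 2) ≤ vp) :
    a * (∑ i, (x i) ^ 2) + 1 / (4 * a) ≤ ∑ i, x i := by
  have hv0 (i : Fin n) : 0 ≤ v i := (hv i).le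
  have hvm0 : 0 ≤ vm := hvm ▸ sum_nonneg fun i _ => hv0 i
  have hδ : 0 ≤ δm := hδm ▸ Real.sqrt_nonneg _
  have hvS : vm ≤ ∑ i, x i ^ 2 :=
    hvm ▸ sum_le_sum fun i _ => (Real.sqrt_le_iff.mp (hx i)).2
  have hsqrt_vm : √(∑ i, √(v i) ^ 2) = √vm := by
    simp only [Real.sq_sqrt (hv0 _), hvm]
  have hsum_sqrt : ∑ i, √(v i) = √(√vm ^ 2 + δm ^ 2) := by
    rw [Real.sq_sqrt hvm0, hδm, Real.sq_sqrt (by positivity), hvm,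
      ← sq_sum_sqrt_eq _ fun i _ => hv0 i, Real.sqrt_sq (by positivity)]
  have hdiff := sqrt_sum_sq_sub_sqrt_sum_sq_le_sum_abs_sub x fun i => √(v i)
  simp only [hsqrt_vm, abs_of_nonneg (sub_nonneg.mpr (hx _)), sum_sub_distrib,
    hsum_sqrt] at hdiff
  have key := sq_div_add_div_two_le (Real.sqrt_nonneg vm) hδ (Real.sqrt_le_sqrt hvS)
    (Real.sqrt_le_iff.mpr ⟨by positivity, hvp ▸ hx2⟩) (by linarith)
  rw [Real.sq_sqrt (by positivity)] at key
  -- also fine when `√vm + δm = 0`, since then `a = 0⁻¹ = 0`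
  refine le_of_eq_of_le ?_ key
  rw [ha]
  simp only [div_eq_mul_inv, one_mul, mul_inv, inv_inv]
  ring

/-- Theorem 1 of the paper (tighter exploration bound), with the explicit constant
`a = 1/(2(√v₋ + δ₋))`: for any vector `x` with `√vᵢ ≤ xᵢ` and `Σ xᵢ² ≤ v₊`,
`a·Σ xᵢ² + 1/(4a) ≤ Σ xᵢ`. -/
theorem affine_variance_bound_le_sum_std (n : ℕ) (hn : 0 < n)
    (v : Fin n → ℝ) (hv : ∀ i, 0 < v i)
    (vm δm vp a : ℝ)
    (hvm : vm = ∑ i, v i)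
    (hδm : δm = Real.sqrt (∑ i, ∑ j ∈ univ.erase i, Real.sqrt (v i * v j)))
    (hvp : vp = (Real.sqrt vm + 2 * δm) ^ 2)
    (ha : a = 1 / (2 * (Real.sqrt vm + δm)))
    (x : Fin n → ℝ)
    (hx : ∀ i, Real.sqrt (v i) ≤ x i)
    (hx2 : (∑ i, (x i) ^ 2) ≤ vp) :
    a * (∑ i, (x i) ^ 2) + 1 / (4 * a) ≤ ∑ i, x i :=
  affine_variance_bound_le_sum_std_general n v hv vm δm vp a hvm hδm hvp ha x hx hx2
end

section
/- Let (E, d) be a metric space, t a positive integer, and κ₁, …, κₜ : E → ℝ functions, each Lipschitz with constant L ≥ 0 and satisfying v₋ ≤ κⱼ(x) ≤ v₊ for all x ∈ E and all j. Let A be a symmetric real t × t matrix whose ℓ²→ℓ² operator norm is at most ρ ≥ 0, let y ∈ ℝᵗ satisfy y⁻ ≤ yⱼ ≤ y⁺ for all j, and let c ≥ 0. Define φ : E → ℝ by φ(x) = Σ_{j,l} A_{jl}·κⱼ(x)·yₗ − c·Σ_{j,l} A_{jl}·κⱼ(x)·κₗ(x). Then φ is Lipschitz with constant t · L · ρ ·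 M, where M = max(|y⁺ − 2c·v₋|, |y⁻ − 2c·v₊|). -/
/-!
Writing `a = κ(x)`, `b = κ(x')` and `w = y - c (a + b)`, symmetry of `A` gives
`φ(x) - φ(x') = (a - b) ⬝ A w`. By Cauchy–Schwarz this is at most `‖a - b‖ · ρ ‖w‖`, and the
entrywise bounds `|aⱼ - bⱼ| ≤ L d(x, x')` and `|wⱼ| ≤ M` give `‖a - b‖ ≤ √t L d(x, x')` and
`‖w‖ ≤ √t M`.
-/

open Finset Matrix

namespace Real

lemma abs_sum_mul_le_sqrt_mul_sqrt {ι : Type*} (s : Finset ι) (f g : ι → ℝ) :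
    |∑ i ∈ s, f i * g i| ≤ √(∑ i ∈ s, f i ^ 2) * √(∑ i ∈ s, g i ^ 2) :=
  (abs_le_sqrt (sum_mul_sq_le_sq_mul_sq _ _ _)).trans_eq
    (sqrt_mul (sum_nonneg fun _ _ => sq_nonneg _) _)

lemma sqrt_sum_sq_le_sqrt_card_mul {ι : Type*} [Fintype ι] {v : ι → ℝ} {B : ℝ} (hB : 0 ≤ B)
    (hv : ∀ i, |v i| ≤ B) : √(∑ i, v i ^ 2) ≤ √(Fintype.card ι) * B := by
  have hsum : ∑ i, v i ^ 2 ≤ Fintype.card ι * B ^ 2 := by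
    calc ∑ i, v i ^ 2 ≤ ∑ _i : ι, B ^ 2 :=
          sum_le_sum fun i _ => sq_abs (v i) ▸ pow_le_pow_left₀ (abs_nonneg _) (hv i) 2
      _ = Fintype.card ι * B ^ 2 := by simp
  calc √(∑ i, v i ^ 2) ≤ √(Fintype.card ι * B ^ 2) := sqrt_le_sqrt hsum
    _ = √(Fintype.card ι) * B := by rw [sqrt_mul (Nat.cast_nonneg _), sqrt_sq hB]

end Real

lemma abs_sub_mul_add_le_max {y yminus yplus c a b vminus vplus : ℝ}
    (hy : yminus ≤ y ∧ y ≤ yplus) (hc : 0 ≤ c)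
    (ha : vminus ≤ a ∧ a ≤ vplus) (hb : vminus ≤ b ∧ b ≤ vplus) :
    |y - c * (a + b)| ≤ max |yplus - 2 * c * vminus| |yminus - 2 * c * vplus| := by
  have hlow := mul_le_mul_of_nonneg_left (add_le_add ha.1 hb.1) hc
  have hupp := mul_le_mul_of_nonneg_left (add_le_add ha.2 hb.2) hc
  have h₁ := (le_abs_self (yplus - 2 * c * vminus)).trans
    (le_max_left _ |yminus - 2 * c * vplus|)
  have h₂ := (neg_le_neg (le_max_right |yplus - 2 * c * vminus| _)).trans
    (neg_abs_le (yminus - 2 * c * vplus))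
  rw [abs_le]
  constructor <;> linarith [hy.1, hy.2]

namespace Matrix

lemma sum_sum_mul_mul_eq_dotProduct_mulVec {m n R : Type*} [Fintype m] [Fintype n]
    [CommSemiring R] (A : Matrix m n R) (a : m → R) (b : n → R) :
    ∑ j, ∑ l, A j l * a j * b l = a ⬝ᵥ A *ᵥ b := by
  simp only [dotProduct, mulVec, mul_sum]
  exact sum_congr rfl fun j _ => sum_congr rfl fun l _ => by ring

lemma IsSymm.dotProduct_mulVec_sub_dotProduct_mulVec {n R : Type*} [Fintype n] [CommRing R]
    {A : Matrix n n R} (hA : A.IsSymm) (a b : n → R) :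
    a ⬝ᵥ A *ᵥ a - b ⬝ᵥ A *ᵥ b = (a - b) ⬝ᵥ A *ᵥ (a + b) := by
  have hswap : a ⬝ᵥ A *ᵥ b = b ⬝ᵥ A *ᵥ a := by
    rw [dotProduct_mulVec, ← mulVec_transpose, hA.eq, dotProduct_comm]
  rw [mulVec_add, sub_dotProduct, dotProduct_add, dotProduct_add, hswap]
  ring

end Matrix

theorem acquisition_lipschitz_general {E : Type*} [MetricSpace E] (t : ℕ)
    (κ : Fin t → E → ℝ) (L : ℝ) (hL : 0 ≤ L)
    (hκLip : ∀ j, ∀ x x' : E, |κ j x - κ j x'| ≤ L * dist x x')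
    (vminus vplus : ℝ) (hκbd : ∀ j, ∀ x : E, vminus ≤ κ j x ∧ κ j x ≤ vplus)
    (A : Matrix (Fin t) (Fin t) ℝ) (hAsymm : A.IsSymm)
    (ρ : ℝ) (hρ : 0 ≤ ρ)
    (hAop : ∀ z : Fin t → ℝ,
      Real.sqrt (∑ i, (A.mulVec z i) ^ 2) ≤ ρ * Real.sqrt (∑ j, (z j) ^ 2))
    (y : Fin t → ℝ) (yminus yplus : ℝ) (hy : ∀ j, yminus ≤ y j ∧ y j ≤ yplus)
    (c : ℝ) (hc : 0 ≤ c)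
    (φ : E → ℝ)
    (hφ : ∀ x : E, φ x =
      (∑ j, ∑ l, A j l * κ j x * y l) - c * ∑ j, ∑ l, A j l * κ j x * κ l x)
    (M : ℝ) (hM : M = max |yplus - 2 * c * vminus| |yminus - 2 * c * vplus|) :
    ∀ x x' : E, |φ x - φ x'| ≤ t * L * ρ * M * dist x x' := by
  intro x x'
  set a : Fin t → ℝ := fun j => κ j x
  set b : Fin t → ℝ := fun j => κ j x'
  set w : Fin t → ℝ := y - c • (a + b)
  have hdiff : φ x - φ x' = ∑ j, (a - b) j * (A *ᵥ w) j := by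
    simp only [hφ, sum_sum_mul_mul_eq_dotProduct_mulVec]
    rw [show ∑ j, (a - b) j * (A *ᵥ w) j = (a - b) ⬝ᵥ A *ᵥ w from rfl, mulVec_sub,
      mulVec_smul, dotProduct_sub, dotProduct_smul, ← hAsymm.dotProduct_mulVec_sub_dotProduct_mulVec,
      sub_dotProduct, smul_eq_mul]
    ring
  have hM0 : 0 ≤ M := hM ▸ (abs_nonneg _).trans (le_max_left _ _)
  have hδ : √(∑ j, (a - b) j ^ 2) ≤ √t * (L * dist x x') := by
    simpa using Real.sqrt_sum_sq_le_sqrt_card_mul (by positivity) fun j => hκLip j x x'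
  have hw : √(∑ j, w j ^ 2) ≤ √t * M := by
    simpa using Real.sqrt_sum_sq_le_sqrt_card_mul (v := w) hM0 fun j =>
      hM ▸ abs_sub_mul_add_le_max (hy j) hc (hκbd j x) (hκbd j x')
  calc |φ x - φ x'| ≤ √(∑ j, (a - b) j ^ 2) * √(∑ j, (A *ᵥ w) j ^ 2) :=
        hdiff ▸ Real.abs_sum_mul_le_sqrt_mul_sqrt _ _ _
    _ ≤ (√t * (L * dist x x')) * (ρ * (√t * M)) :=
        mul_le_mul hδ ((hAop w).trans (mul_le_mul_of_nonneg_left hw hρ))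
          (Real.sqrt_nonneg _) (by positivity)
    _ = t * L * ρ * M * dist x x' := by
        linear_combination (L * ρ * M * dist x x') * Real.mul_self_sqrt (Nat.cast_nonneg t)

/-- Lipschitz constant of the local acquisition function (Proposition 3 of the paper):
if the kernel evaluations `κⱼ` are `L`-Lipschitz and take values in `[v₋, v₊]`, `A` is a
symmetric matrix of operator norm at most `ρ`, the outputs `yⱼ` lie in `[y⁻, y⁺]`, and
`c ≥ 0`, then `φ(x) = Σ_{j,l} A_{jl} κⱼ(x) yₗ − c Σ_{j,l} A_{jl} κⱼ(x) κₗ(x)` is Lipschitz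
with constant `t·L·ρ·M`, where `M = max(|y⁺ − 2c·v₋|, |y⁻ − 2c·v₊|)`. -/
theorem acquisition_lipschitz {E : Type*} [MetricSpace E] (t : ℕ) (ht : 0 < t)
    (κ : Fin t → E → ℝ) (L : ℝ) (hL : 0 ≤ L)
    (hκLip : ∀ j, ∀ x x' : E, |κ j x - κ j x'| ≤ L * dist x x')
    (vminus vplus : ℝ) (hκbd : ∀ j, ∀ x : E, vminus ≤ κ j x ∧ κ j x ≤ vplus)
    (A : Matrix (Fin t) (Fin t) ℝ) (hAsymm : A.IsSymm)
    (ρ : ℝ) (hρ : 0 ≤ ρ)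
    (hAop : ∀ z : Fin t → ℝ,
      Real.sqrt (∑ i, (A.mulVec z i) ^ 2) ≤ ρ * Real.sqrt (∑ j, (z j) ^ 2))
    (y : Fin t → ℝ) (yminus yplus : ℝ) (hy : ∀ j, yminus ≤ y j ∧ y j ≤ yplus)
    (c : ℝ) (hc : 0 ≤ c)
    (φ : E → ℝ)
    (hφ : ∀ x : E, φ x =
      (∑ j, ∑ l, A j l * κ j x * y l) - c * ∑ j, ∑ l, A j l * κ j x * κ l x)
    (M : ℝ) (hM : M = max |yplus - 2 * c * vminus| |yminus - 2 * c * vplus|) :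
    ∀ x x' : E, |φ x - φ x'| ≤ t * L * ρ * M * dist x x' :=
  acquisition_lipschitz_general t κ L hL hκLip vminus vplus hκbd A hAsymm ρ hρ hAop y yminus yplus
    hy c hc φ hφ M hM
end

section
/- Let (Ω, 𝓕, ℙ) be a probability space, D a nonempty finite set, and for each positive integer t and each x ∈ D let X_{t,x} : Ω → ℝ be a measurable random variable whose law under ℙ is the Gaussian measure with mean μ_{t,x} ∈ ℝ and variance σ_{t,x}² where σ_{t,x} > 0. Fix δ ∈ (0,1), a > 0, and set β_t = 2·log(|D|·π²·t² / (6δ)). Then ℙ( for all positive integers t and all x ∈ D, |X_{t,x} − μ_{t,x}| ≤ β_t^{1/2}·(a·σ_{t,x}² + 1/(4a)) ) ≥ 1 − δ. -/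
/-!
Each bad event is a two-sided Gaussian tail. Beyond `m + s` the density of `N(m, v)` is at most
`exp (-s² / (2v))` times the density of `N(m + s, v)`, and symmetrically below `m - s`. After
translating both shifted Gaussians back to a common mean, their masses on `(m + s, ∞)` and
`(-∞, m - s)` become those of two disjoint half-lines, so
`P(|Y - m| > c √v) ≤ exp (-c² / 2)`. With `c = √β_t` and `σ ≤ a σ² + 1 / (4a)`, the bad event at
`(t, x)` has probability at most `6δ / (|D| π² t²)`, and the union bound over `D × ℕ+` gives at
most `δ` since `∑ 1 / t² = π² / 6`.
-/

open MeasureTheory ProbabilityTheory Real Set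
open scoped NNReal

lemma le_mul_sq_add_one_div_four_mul {a : ℝ} (ha : 0 < a) (s : ℝ) :
    s ≤ a * s ^ 2 + 1 / (4 * a) := by
  have key : a * s ^ 2 + 1 / (4 * a) - s = (a * s - 1 / 2) ^ 2 / a := by
    field_simp; ring
  rw [← sub_nonneg, key]
  positivity

namespace ProbabilityTheory

lemma gaussianPDFReal_le_exp_mul_gaussianPDFReal_add {m s y : ℝ} (v : ℝ≥0)
    (hy : 0 ≤ s * (y - (m + s))) :
    gaussianPDFReal m v y ≤ exp (-s ^ 2 / (2 * v)) * gaussianPDFReal (m + s) v y := by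
  simp only [gaussianPDFReal]
  rw [mul_left_comm, ← exp_add]
  gcongr
  rw [← add_div]
  gcongr
  nlinarith

lemma gaussianReal_le_exp_mul_gaussianReal_add {m s : ℝ} {v : ℝ≥0} (hv : v ≠ 0) {S : Set ℝ}
    (hS : ∀ y ∈ S, 0 ≤ s * (y - (m + s))) :
    gaussianReal m v S ≤ ENNReal.ofReal (exp (-s ^ 2 / (2 * v))) * gaussianReal (m + s) v S := by
  rw [gaussianReal_apply _ hv, gaussianReal_apply _ hv,
    ← lintegral_const_mul _ (measurable_gaussianPDF _ _)]
  refine setLIntegral_mono ((measurable_gaussianPDF _ _).const_mul _) fun y hy => ?_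
  rw [gaussianPDF, gaussianPDF, ← ENNReal.ofReal_mul (exp_nonneg _)]
  exact ENNReal.ofReal_le_ofReal (gaussianPDFReal_le_exp_mul_gaussianPDFReal_add v (hS y hy))

lemma gaussianReal_preimage_sub_self {S : Set ℝ} (hS : MeasurableSet S) (m : ℝ) (v : ℝ≥0) :
    gaussianReal m v ((· - m) ⁻¹' S) = gaussianReal 0 v S := by
  rw [← Measure.map_apply (measurable_sub_const m) hS, gaussianReal_map_sub_const, sub_self]

lemma gaussianReal_Ioi_self_add_gaussianReal_Iio_self_le_one (m₁ m₂ : ℝ) (v : ℝ≥0) :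
    gaussianReal m₁ v (Ioi m₁) + gaussianReal m₂ v (Iio m₂) ≤ 1 := by
  have h₁ : Ioi m₁ = (· - m₁) ⁻¹' Ioi 0 := by ext; simp
  have h₂ : Iio m₂ = (· - m₂) ⁻¹' Iio 0 := by ext; simp
  rw [h₁, h₂, gaussianReal_preimage_sub_self measurableSet_Ioi,
    gaussianReal_preimage_sub_self measurableSet_Iio, ← measure_union _ measurableSet_Iio]
  · exact prob_le_one
  · exact Ioi_disjoint_Iio_same

lemma gaussianReal_two_sided_tail_le (m : ℝ) {v : ℝ≥0} (hv : v ≠ 0) {c : ℝ} (hc : 0 ≤ c) :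
    gaussianReal m v {y | c * √v < |y - m|} ≤ ENNReal.ofReal (exp (-c ^ 2 / 2)) := by
  set s := c * √v
  have hs : 0 ≤ s := by positivity
  have hexp : -s ^ 2 / (2 * v) = -c ^ 2 / 2 := by
    have : (v : ℝ) ≠ 0 := by exact_mod_cast hv
    rw [mul_pow, sq_sqrt v.coe_nonneg]
    field_simp
  have hsplit : {y | s < |y - m|} ⊆ Ioi (m + s) ∪ Iio (m + -s) := fun y (hy : s < |y - m|) => by
    rcases lt_abs.1 hy with h | h
    · exact Or.inl (by simp only [mem_Ioi]; linarith)
    · exact Or.inr (by simp only [mem_Iio]; linarith)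
  have hright := gaussianReal_le_exp_mul_gaussianReal_add (m := m) (s := s) hv (S := Ioi (m + s))
    fun y hy => mul_nonneg hs (sub_nonneg.2 (le_of_lt hy))
  have hleft := gaussianReal_le_exp_mul_gaussianReal_add (m := m) (s := -s) hv (S := Iio (m + -s))
    fun y hy => mul_nonneg_of_nonpos_of_nonpos (neg_nonpos.2 hs) (sub_nonpos.2 (le_of_lt hy))
  rw [neg_sq, hexp] at hleft
  rw [hexp] at hright
  calc gaussianReal m v {y | s < |y - m|}
      ≤ gaussianReal m v (Ioi (m + s)) + gaussianReal m v (Iio (m + -s)) :=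
        (measure_mono hsplit).trans (measure_union_le _ _)
    _ ≤ ENNReal.ofReal (exp (-c ^ 2 / 2)) *
          (gaussianReal (m + s) v (Ioi (m + s)) + gaussianReal (m + -s) v (Iio (m + -s))) := by
        rw [mul_add]; exact add_le_add hright hleft
    _ ≤ ENNReal.ofReal (exp (-c ^ 2 / 2)) :=
        mul_le_of_le_one_right' (gaussianReal_Ioi_self_add_gaussianReal_Iio_self_le_one _ _ v)

lemma HasLaw.two_sided_tail_le_of_gaussianReal {Ω : Type*} [MeasurableSpace Ω] {P : Measure Ω}
    {X : Ω → ℝ} {m σ : ℝ} (hσ : 0 < σ) (hX : HasLaw X (gaussianReal m ⟨σ ^ 2, sq_nonneg σ⟩) P)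
    {c : ℝ} (hc : 0 ≤ c) :
    P {ω | c * σ < |X ω - m|} ≤ ENNReal.ofReal (exp (-c ^ 2 / 2)) := by
  have hv : (⟨σ ^ 2, sq_nonneg σ⟩ : ℝ≥0) ≠ 0 := NNReal.coe_ne_zero.1 (pow_ne_zero 2 hσ.ne')
  have hsd : σ = √(σ ^ 2) := (sqrt_sq hσ.le).symm
  rw [hsd, hX.measure_eq (p := fun y => c * √(σ ^ 2) < |y - m|)
    (measurableSet_lt measurable_const (measurable_id.sub_const m).abs)]
  exact gaussianReal_two_sided_tail_le m hv hc

end ProbabilityTheory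

lemma one_sub_tsum_measure_compl_le_measure_iInter {Ω ι : Type*} [MeasurableSpace Ω] [Countable ι]
    (P : Measure Ω) [IsProbabilityMeasure P] (s : ι → Set Ω) :
    1 - ∑' i, P (s i)ᶜ ≤ P (⋂ i, s i) := by
  rw [tsub_le_iff_right]
  calc 1 = P univ := measure_univ.symm
    _ ≤ P (⋂ i, s i) + P (⋂ i, s i)ᶜ := measure_univ_le_add_compl _
    _ ≤ P (⋂ i, s i) + ∑' i, P (s i)ᶜ := by
        rw [compl_iInter]; gcongr; exact measure_iUnion_le _

lemma hasSum_pnat_one_div_sq : HasSum (fun t : ℕ+ => 1 / ((t : ℕ) : ℝ) ^ 2) (π ^ 2 / 6) :=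
  (hasSum_pnat_iff (f := fun n : ℕ => 1 / (n : ℝ) ^ 2)).2 (by simpa using hasSum_zeta_two)

lemma tsum_ofReal_six_mul_div_card_mul_pi_sq_mul_sq (ι : Type*) [Fintype ι] [Nonempty ι] {δ : ℝ}
    (hδ : 0 ≤ δ) :
    ∑' p : ℕ+ × ι, ENNReal.ofReal (6 * δ / (Fintype.card ι * π ^ 2 * (p.1 : ℝ) ^ 2)) =
      ENNReal.ofReal δ := by
  have hsum : HasSum (fun t : ℕ+ => 6 * δ / (π ^ 2 * (t : ℝ) ^ 2)) δ := by
    have hlimit : 6 * δ / π ^ 2 * (π ^ 2 / 6) = δ := by field_simp [pi_ne_zero]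
    have hterm : (fun t : ℕ+ => 6 * δ / (π ^ 2 * (t : ℝ) ^ 2)) =
        fun t : ℕ+ => 6 * δ / π ^ 2 * (1 / ((t : ℕ) : ℝ) ^ 2) := by
      ext t; ring
    have h := hasSum_pnat_one_div_sq.mul_left (6 * δ / π ^ 2)
    rwa [hlimit, ← hterm] at h
  have hcard : (Fintype.card ι : ℝ) ≠ 0 := by positivity
  calc ∑' p : ℕ+ × ι, ENNReal.ofReal (6 * δ / (Fintype.card ι * π ^ 2 * (p.1 : ℝ) ^ 2))
      = ∑' t : ℕ+, ENNReal.ofReal (6 * δ / (π ^ 2 * (t : ℝ) ^ 2)) := by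
        rw [ENNReal.tsum_prod']
        congr 1; ext t
        simp only [tsum_fintype, Finset.sum_const, Finset.card_univ, nsmul_eq_mul]
        rw [← ENNReal.ofReal_natCast, ← ENNReal.ofReal_mul (by positivity)]
        congr 1; field_simp
    _ = ENNReal.ofReal δ := by
        rw [← ENNReal.ofReal_tsum_of_nonneg (fun t => by positivity) hsum.summable, hsum.tsum_eq]

lemma exp_neg_sq_sqrt_two_mul_log_div_two_le {A : ℝ} (hA : 0 < A) :
    exp (-√(2 * log A) ^ 2 / 2) ≤ A⁻¹ :=
  calc exp (-√(2 * log A) ^ 2 / 2) ≤ exp (-(2 * log A) / 2) := by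
        gcongr; rw [sq_sqrt']; exact le_max_left _ _
    _ = A⁻¹ := by rw [neg_div, mul_div_cancel_left₀ _ two_ne_zero, exp_neg, exp_log hA]

/-- Concentration lemma (Lemma 2 of the paper): if for each time `t ≥ 1` and each point
`x` of a finite domain `D` the random variable `X t x` is Gaussian with mean `μ t x` and
variance `σ t x ^ 2`, then with `β_t = 2 log(|D|π²t²/(6δ))`, with probability at least
`1 − δ`, simultaneously for all `t` and `x`,
`|X t x − μ t x| ≤ β_t^{1/2}·(a·σ t x² + 1/(4a))`. -/
theorem concentration_lemma {Ω : Type*} [MeasurableSpace Ω]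
    (P : Measure Ω) [IsProbabilityMeasure P]
    {D : Type*} [Fintype D] [Nonempty D]
    (X : ℕ+ → D → Ω → ℝ) (μ : ℕ+ → D → ℝ) (σ : ℕ+ → D → ℝ)
    (hσ : ∀ t x, 0 < σ t x)
    (hXmeas : ∀ t x, Measurable (X t x))
    (hlaw : ∀ t x, Measure.map (X t x) P = gaussianReal (μ t x) ⟨(σ t x) ^ 2, sq_nonneg _⟩)
    (δ : ℝ) (hδ : δ ∈ Set.Ioo (0 : ℝ) 1) (a : ℝ) (ha : 0 < a)
    (β : ℕ+ → ℝ)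
    (hβ : ∀ t : ℕ+, β t =
      2 * Real.log ((Fintype.card D : ℝ) * Real.pi ^ 2 * (t : ℝ) ^ 2 / (6 * δ))) :
    ENNReal.ofReal (1 - δ) ≤
      P {ω | ∀ (t : ℕ+) (x : D),
        |X t x ω - μ t x| ≤ Real.sqrt (β t) * (a * (σ t x) ^ 2 + 1 / (4 * a))} := by
  have hδ0 : 0 < δ := hδ.1
  set good : ℕ+ × D → Set Ω := fun p =>
    {ω | |X p.1 p.2 ω - μ p.1 p.2| ≤ √(β p.1) * (a * σ p.1 p.2 ^ 2 + 1 / (4 * a))}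
  have hbad : ∀ p : ℕ+ × D,
      P (good p)ᶜ ≤ ENNReal.ofReal (6 * δ / (Fintype.card D * π ^ 2 * (p.1 : ℝ) ^ 2)) := by
    rintro ⟨t, x⟩
    calc P (good (t, x))ᶜ ≤ P {ω | √(β t) * σ t x < |X t x ω - μ t x|} :=
          measure_mono fun ω (hω : ¬ _ ≤ _) => (mul_le_mul_of_nonneg_left
            (le_mul_sq_add_one_div_four_mul ha _) (sqrt_nonneg _)).trans_lt (not_le.1 hω)
      _ ≤ ENNReal.ofReal (exp (-√(β t) ^ 2 / 2)) :=
          HasLaw.two_sided_tail_le_of_gaussianReal (hσ t x)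
            ⟨(hXmeas t x).aemeasurable, hlaw t x⟩ (sqrt_nonneg _)
      _ ≤ ENNReal.ofReal (6 * δ / (Fintype.card D * π ^ 2 * (t : ℝ) ^ 2)) := by
          rw [hβ t]
          exact ENNReal.ofReal_le_ofReal
            ((exp_neg_sq_sqrt_two_mul_log_div_two_le (by positivity)).trans_eq (inv_div _ _))
  calc ENNReal.ofReal (1 - δ) = 1 - ENNReal.ofReal δ := by
        rw [ENNReal.ofReal_sub _ hδ0.le, ENNReal.ofReal_one]
    _ ≤ 1 - ∑' p, P (good p)ᶜ := by
        gcongr 1 - ?_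
        exact (ENNReal.tsum_le_tsum hbad).trans_eq
          (tsum_ofReal_six_mul_div_card_mul_pi_sq_mul_sq D hδ0.le)
    _ ≤ P (⋂ p, good p) := one_sub_tsum_measure_compl_le_measure_iInter P good
    _ = _ := by congr 1; ext ω; simp [good, Prod.forall]
end

section
/- Let D be a nonempty set, f, μ, s : D → ℝ functions, a > 0 and B ≥ 0 real numbers. Assume that |f(x) − μ(x)| ≤ B·(a·s(x)² + 1/(4a)) for every x ∈ D, and that x̂ ∈ D maximizes the acquisition function, i.e. μ(x) + B·a·s(x)² ≤ μ(x̂) + B·a·s(x̂)² for every x ∈ D. Then for every x* ∈ D, f(x*) − f(x̂) ≤ 2·B·(a·s(x̂)² + 1/(4a)). -/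
/-! The usual UCB argument: the confidence bound gives `f x* ≤ μ x* + w x*` and
`f x̂ ≥ μ x̂ - w x̂`, and `x̂` maximizes `μ + w`, which differs from the acquisition
function `μ + B·a·s²` only by the constant `B/(4a)`. -/

theorem sub_le_two_mul_width_of_abs_sub_le_of_maximizes {D : Type*} (f μ w : D → ℝ)
    (hconf : ∀ x, |f x - μ x| ≤ w x) (xhat : D) (hmax : ∀ x, μ x + w x ≤ μ xhat + w xhat)
    (xstar : D) : f xstar - f xhat ≤ 2 * w xhat := by
  have hstar := (abs_le.mp (hconf xstar)).2
  have hhat := (abs_le.mp (hconf xhat)).1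
  linarith [hmax xstar]

theorem immediate_regret_bound_general {D : Type*}
    (f μ s : D → ℝ) (a B : ℝ)
    (hconf : ∀ x : D, |f x - μ x| ≤ B * (a * (s x) ^ 2 + 1 / (4 * a)))
    (xhat : D)
    (hmax : ∀ x : D, μ x + B * a * (s x) ^ 2 ≤ μ xhat + B * a * (s xhat) ^ 2) :
    ∀ xstar : D, f xstar - f xhat ≤ 2 * B * (a * (s xhat) ^ 2 + 1 / (4 * a)) := by
  intro xstar
  have hmax_width : ∀ x, μ x + B * (a * (s x) ^ 2 + 1 / (4 * a))
      ≤ μ xhat + B * (a * (s xhat) ^ 2 + 1 / (4 * a)) := fun x => by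
    linear_combination hmax x
  rw [mul_assoc]
  exact sub_le_two_mul_width_of_abs_sub_le_of_maximizes f μ _ hconf xhat hmax_width xstar

/-- Deterministic core of the immediate regret bound (Theorem 3 of the paper): if the
confidence bound `|f(x) − μ(x)| ≤ B(a·s(x)² + 1/(4a))` holds on `D` and `x̂` maximizes
the acquisition function `μ + B·a·s²`, then the regret at `x̂` is at most
`2B(a·s(x̂)² + 1/(4a))`. -/
theorem immediate_regret_bound {D : Type*} [Nonempty D]
    (f μ s : D → ℝ) (a B : ℝ) (ha : 0 < a) (hB : 0 ≤ B)
    (hconf : ∀ x : D, |f x - μ x| ≤ B * (a * (s x) ^ 2 + 1 / (4 * a)))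
    (xhat : D)
    (hmax : ∀ x : D, μ x + B * a * (s x) ^ 2 ≤ μ xhat + B * a * (s xhat) ^ 2) :
    ∀ xstar : D, f xstar - f xhat ≤ 2 * B * (a * (s xhat) ^ 2 + 1 / (4 * a)) :=
  immediate_regret_bound_general f μ s a B hconf xhat hmax
end
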